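/- Let s(a) := Σ_{i=1}^n c_i λ_i(|a|) for a ∈ Mₙ(ℂ), with c_i ≥ 0. If c_k < c_{k+1} for some k, then s is not 2-positive: there exist positive diagonal matrices a, b, c in Mₙ(ℂ) with [[a, c],[c, b]] ≥ 0 but s(a)s(b) < s(c)², so [[s(a), s(c)],[s(c), s(b)]] is not positive semidefinite. -/

import Mathlib

open Matrix BigOperators Finset
open scoped ComplexOrder

/-! Write the three matrices as `a = diag p²`, `b = diag q²`, `c = diag (p q)`, where
`p = (1, …, 1, u, 0, …)` has its `u` in slot `k + 1` and `q` is `p` with slots `k` and `k + 1`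
swapped. Then `[[a, c], [c, b]]` is the Gram matrix of the columns of `[diag p, diag q]`, hence
positive semidefinite. A positive semidefinite diagonal matrix is its own absolute value, and its
ordered eigenvalues are the decreasing rearrangement of its diagonal; since `p²` and `p q` are
decreasing and `q²` is a rearrangement of `p²`, this gives `s(b) = s(a)` and
`s(c) - s(a) = (1 - u) (c_{k+1} u - c_k)`, which is positive for `c_k / c_{k+1} < u < 1`. -/

/-- The `i`-th largest eigenvalue (0-indexed) of a Hermitian matrix. -/
noncomputable def eigDesc {n : ℕ} (a : Matrix (Fin n) (Fin n) ℂ) (ha : a.IsHermitian) (i : Fin n) : ℝ :=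
  ha.eigenvalues (Tuple.sort ha.eigenvalues i.rev)

/-- Eigenvalues in decreasing order, extended by `0` beyond the size. `eigN a ha i = λ_{i+1}(a)`. -/
noncomputable def eigN {n : ℕ} (a : Matrix (Fin n) (Fin n) ℂ) (ha : a.IsHermitian) (i : ℕ) : ℝ :=
  if h : i < n then eigDesc a ha ⟨i, h⟩ else 0

/-- The non-linear trace of Choquet type:
`φ_α(a) = ∑_{i=1}^{n-1} (λ_i(a) - λ_{i+1}(a)) α(i) + λ_n(a) α(n)`. -/
noncomputable def choquetTrace {n : ℕ} (α : ℕ → ℝ) (a : Matrix (Fin n) (Fin n) ℂ)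
    (ha : a.IsHermitian) : ℝ :=
  ∑ i ∈ Finset.range n, (eigN a ha i - eigN a ha (i + 1)) * α (i + 1)

/-- Functional calculus of a Hermitian matrix `a` by a function `f : ℝ → ℝ` on its eigenvalues. -/
noncomputable def funCalc {n : ℕ} (f : ℝ → ℝ) (a : Matrix (Fin n) (Fin n) ℂ)
    (ha : a.IsHermitian) : Matrix (Fin n) (Fin n) ℂ :=
  (ha.eigenvectorUnitary : Matrix (Fin n) (Fin n) ℂ) *
    Matrix.diagonal (fun i => (f (ha.eigenvalues i) : ℂ)) *
    star (ha.eigenvectorUnitary : Matrix (Fin n) (Fin n) ℂ)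

/-- The absolute value `|a| = (a^* a)^{1/2}` of a matrix. -/
noncomputable def matAbs {n : ℕ} (a : Matrix (Fin n) (Fin n) ℂ) : Matrix (Fin n) (Fin n) ℂ :=
  ((Matrix.posSemidef_conjTranspose_mul_self a).1.eigenvectorUnitary : Matrix (Fin n) (Fin n) ℂ) *
    Matrix.diagonal (fun i => ((√((Matrix.posSemidef_conjTranspose_mul_self a).1.eigenvalues i) : ℝ) : ℂ)) *
    (star (Matrix.posSemidef_conjTranspose_mul_self a).1.eigenvectorUnitary : Matrix (Fin n) (Fin n) ℂ)

theorem matAbs_isHermitian {n : ℕ} (a : Matrix (Fin n) (Fin n) ℂ) : (matAbs a).IsHermitian := by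
  unfold matAbs
  simp [IsHermitian, Matrix.conjTranspose_mul, Matrix.star_eq_conjTranspose, Matrix.diagonal_conjTranspose, mul_assoc]
  rw [show ∀ f : Fin n → ℝ, (star fun i => (f i : ℂ)) = fun i => (f i : ℂ) from fun f => by ext; simp]

section Spectrum

variable {m : ℕ}

theorem monotone_eq_of_map_univ_eq {f g : Fin m → ℝ} (hf : Monotone f) (hg : Monotone g)
    (h : univ.val.map f = univ.val.map g) : f = g := by
  rw [Fin.univ_val_map, Fin.univ_val_map, Multiset.coe_eq_coe] at h
  exact List.ofFn_injective (h.eq_of_sortedLE hf.sortedLE_ofFn hg.sortedLE_ofFn)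

theorem map_univ_comp_perm {α : Type*} (f : Fin m → α) (σ : Equiv.Perm (Fin m)) :
    univ.val.map (f ∘ σ) = univ.val.map f := by
  rw [← Multiset.map_map, Multiset.map_univ_val_equiv]

theorem map_univ_comp_swap_val {α : Type*} (f : ℕ → α) {a b : ℕ} (ha : a < m) (hb : b < m) :
    univ.val.map (fun j : Fin m => f (Equiv.swap a b j)) = univ.val.map fun j : Fin m => f j := by
  have hswap : (fun j : Fin m => f (Equiv.swap a b j)) =
      (fun j : Fin m => f j) ∘ Equiv.swap ⟨a, ha⟩ ⟨b, hb⟩ := by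
    funext j
    simp [← Fin.val_injective.swap_apply]
  rw [hswap, map_univ_comp_perm]

theorem eigDesc_eq_of_map_univ_eq {a : Matrix (Fin m) (Fin m) ℂ} (ha : a.IsHermitian)
    {w : Fin m → ℝ} (hw : Antitone w) (h : univ.val.map ha.eigenvalues = univ.val.map w) :
    eigDesc a ha = w := by
  have hsorted : ha.eigenvalues ∘ Tuple.sort ha.eigenvalues = w ∘ Fin.rev :=
    monotone_eq_of_map_univ_eq (Tuple.monotone_sort _) (hw.comp fun _ _ => Fin.rev_le_rev.2)
      (by rw [map_univ_comp_perm, h]; exact (map_univ_comp_perm w Fin.revPerm).symm)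
  funext i
  simpa [eigDesc] using congrFun hsorted i.rev

theorem map_univ_eigenvalues_diagonal {ι : Type*} [Fintype ι] [DecidableEq ι] (d : ι → ℝ)
    (hd : (diagonal fun i => (d i : ℂ)).IsHermitian) :
    univ.val.map hd.eigenvalues = univ.val.map d := by
  have hroots := hd.roots_charpoly_eq_eigenvalues
  simp only [charpoly_diagonal] at hroots
  rw [Polynomial.roots_prod _ _ (prod_ne_zero_iff.2 fun i _ => Polynomial.X_sub_C_ne_zero _)]
    at hroots
  apply Multiset.map_injective Complex.ofReal_injective
  simpa [Multiset.map_map] using hroots.symm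

theorem matAbs_eq_cfc (a : Matrix (Fin m) (Fin m) ℂ) : matAbs a = cfc Real.sqrt (aᴴ * a) := by
  rw [IsHermitian.cfc_eq (posSemidef_conjTranspose_mul_self a).1, IsHermitian.cfc,
    Unitary.conjStarAlgAut_apply]
  rfl

theorem matAbs_of_posSemidef {a : Matrix (Fin m) (Fin m) ℂ} (ha : a.PosSemidef) :
    matAbs a = a := by
  rw [matAbs_eq_cfc, ha.1, ← pow_two, ← cfc_comp_pow Real.sqrt 2 a (ha := ha.1.isSelfAdjoint)]
  conv_rhs => rw [← cfc_id' ℝ a ha.1.isSelfAdjoint]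
  refine cfc_congr fun x hx => ?_
  rw [ha.1.spectrum_real_eq_range_eigenvalues] at hx
  obtain ⟨i, rfl⟩ := hx
  exact Real.sqrt_sq (ha.eigenvalues_nonneg i)

theorem eigN_matAbs_of_posSemidef {a : Matrix (Fin m) (Fin m) ℂ} (ha : a.PosSemidef) (i : ℕ) :
    eigN (matAbs a) (matAbs_isHermitian a) i = eigN a ha.1 i := by
  congr 1
  exact matAbs_of_posSemidef ha

theorem eigN_matAbs_diagonal {d : Fin m → ℝ} (hd : ∀ j, 0 ≤ d j) {w : ℕ → ℝ} (hw : Antitone w)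
    (hdw : univ.val.map d = univ.val.map fun j : Fin m => w j) {i : ℕ} (hi : i < m) :
    eigN (matAbs (diagonal fun j => (d j : ℂ))) (matAbs_isHermitian _) i = w i := by
  have hD : (diagonal fun j => (d j : ℂ)).PosSemidef :=
    posSemidef_diagonal_iff.2 fun j => by exact_mod_cast hd j
  rw [eigN_matAbs_of_posSemidef hD, eigN, dif_pos hi,
    eigDesc_eq_of_map_univ_eq hD.1 (hw.comp_monotone Fin.val_strictMono.monotone)
      ((map_univ_eigenvalues_diagonal d hD.1).trans hdw)]
  rfl

theorem sum_mul_eigN_matAbs_diagonal (c : ℕ → ℝ) {d : Fin m → ℝ} (hd : ∀ j, 0 ≤ d j)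
    {w : ℕ → ℝ} (hw : Antitone w) (hdw : univ.val.map d = univ.val.map fun j : Fin m => w j) :
    ∑ i ∈ range m, c i * eigN (matAbs (diagonal fun j => (d j : ℂ))) (matAbs_isHermitian _) i =
      ∑ i ∈ range m, c i * w i :=
  sum_congr rfl fun _ hi => by rw [eigN_matAbs_diagonal hd hw hdw (mem_range.1 hi)]

end Spectrum

theorem posSemidef_fromBlocks_diagonal_mul {ι : Type*} [Fintype ι] [DecidableEq ι]
    (p q : ι → ℝ) :
    (fromBlocks (diagonal fun i => ((p i * p i : ℝ) : ℂ)) (diagonal fun i => ((p i * q i : ℝ) : ℂ))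
      (diagonal fun i => ((p i * q i : ℝ) : ℂ))
      (diagonal fun i => ((q i * q i : ℝ) : ℂ))).PosSemidef := by
  set P : Matrix ι ι ℂ := diagonal fun i => (p i : ℂ)
  set Q : Matrix ι ι ℂ := diagonal fun i => (q i : ℂ)
  have hgram : (fromCols P Q)ᴴ * fromCols P Q =
      fromBlocks (diagonal fun i => ((p i * p i : ℝ) : ℂ))
        (diagonal fun i => ((p i * q i : ℝ) : ℂ)) (diagonal fun i => ((p i * q i : ℝ) : ℂ))
        (diagonal fun i => ((q i * q i : ℝ) : ℂ)) := by
    simp [P, Q, conjTranspose_fromCols_eq_fromRows_conjTranspose, diagonal_conjTranspose,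
      mul_comm]
  exact hgram ▸ posSemidef_conjTranspose_mul_self _

theorem not_posSemidef_of_mul_lt_sq {x y z : ℝ} (h : x * y < z ^ 2) :
    ¬ (!![(x : ℂ), z; z, y] : Matrix (Fin 2) (Fin 2) ℂ).PosSemidef := fun hP => by
  have hdet := hP.det_nonneg
  rw [det_fin_two_of, ← Complex.ofReal_mul, ← Complex.ofReal_mul, ← Complex.ofReal_sub,
    Complex.zero_le_real] at hdet
  nlinarith

def stair (k : ℕ) (u : ℝ) (i : ℕ) : ℝ := if i ≤ k then 1 else if i = k + 1 then u else 0

section Stair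

variable {k : ℕ} {u : ℝ}

theorem stair_nonneg (hu : 0 ≤ u) (i : ℕ) : 0 ≤ stair k u i := by
  unfold stair; split_ifs <;> linarith

theorem stair_antitone (hu0 : 0 ≤ u) (hu1 : u ≤ 1) : Antitone (stair k u) := by
  intro a b hab; unfold stair; split_ifs <;> first | omega | linarith

theorem stair_mul_self_antitone (hu0 : 0 ≤ u) (hu1 : u ≤ 1) :
    Antitone fun i => stair k u i * stair k u i := fun _ _ hab =>
  have hp := stair_antitone (k := k) hu0 hu1 hab
  mul_le_mul hp hp (stair_nonneg hu0 _) (stair_nonneg hu0 _)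

theorem stair_mul_stair_swap_antitone (hu0 : 0 ≤ u) (hu1 : u ≤ 1) :
    Antitone fun i => stair k u i * stair k u (Equiv.swap k (k + 1) i) := by
  intro a b hab
  simp only [stair, Equiv.swap_apply_def]
  split_ifs <;> first | omega | nlinarith

theorem sum_mul_stair_swap_sub_sum_mul_stair (c : ℕ → ℝ) {n : ℕ} (hk : k + 1 < n) :
    ∑ i ∈ range n, c i * (stair k u i * stair k u (Equiv.swap k (k + 1) i)) -
      ∑ i ∈ range n, c i * (stair k u i * stair k u i) = (1 - u) * (c (k + 1) * u - c k) := by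
  rw [← sum_sub_distrib, sum_eq_add_of_mem k (k + 1) (mem_range.2 (by omega))
    (mem_range.2 hk) (by omega)]
  · simp only [stair, le_refl, ↓reduceIte, Equiv.swap_apply_left, Equiv.swap_apply_right,
      add_le_iff_nonpos_right, nonpos_iff_eq_zero, one_ne_zero, one_mul, mul_one]
    ring
  · rintro i - ⟨hik, hik1⟩
    simp [stair, Equiv.swap_apply_of_ne_of_ne hik hik1]

end Stair

/-- if `c_k < c_{k+1}` for some `k`, then `s(a) = ∑ c_i λ_i(|a|)`
is not 2-positive (here `c` is 0-indexed: `c i` is the coefficient of `λ_{i+1}`). -/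
theorem stmt13 (n : ℕ) (c : ℕ → ℝ) (hnn : ∀ i : ℕ, 0 ≤ c i)
    (k : ℕ) (hk : k + 1 < n) (hck : c k < c (k + 1))
    (s : Matrix (Fin n) (Fin n) ℂ → ℝ)
    (hs : ∀ a, s a = ∑ i ∈ Finset.range n, c i * eigN (matAbs a) (matAbs_isHermitian a) i) :
    ∃ A B C : Matrix (Fin n) (Fin n) ℂ,
      (∃ f : Fin n → ℝ, (∀ i, 0 ≤ f i) ∧ A = Matrix.diagonal fun i => (f i : ℂ)) ∧
      (∃ g : Fin n → ℝ, (∀ i, 0 ≤ g i) ∧ B = Matrix.diagonal fun i => (g i : ℂ)) ∧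
      (∃ h : Fin n → ℝ, (∀ i, 0 ≤ h i) ∧ C = Matrix.diagonal fun i => (h i : ℂ)) ∧
      (Matrix.fromBlocks A C C B).PosSemidef ∧
      s A * s B < s C ^ 2 ∧
      ¬ (!![(s A : ℂ), (s C : ℂ); (s C : ℂ), (s B : ℂ)] : Matrix (Fin 2) (Fin 2) ℂ).PosSemidef := by
  have hck1 : 0 < c (k + 1) := (hnn k).trans_lt hck
  obtain ⟨u, hku, hu1⟩ := exists_between ((div_lt_one hck1).2 hck)
  have hu0 : 0 ≤ u := (div_nonneg (hnn k) hck1.le).trans hku.le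
  set p := stair k u
  set q := fun i => p (Equiv.swap k (k + 1) i)
  have hsA := sum_mul_eigN_matAbs_diagonal c (d := fun j : Fin n => p j * p j)
    (fun _ => mul_self_nonneg _) (stair_mul_self_antitone hu0 hu1.le) rfl
  have hsB := sum_mul_eigN_matAbs_diagonal c (d := fun j : Fin n => q j * q j)
    (fun _ => mul_self_nonneg _) (stair_mul_self_antitone hu0 hu1.le)
    (map_univ_comp_swap_val (fun i => p i * p i) (by omega) hk)
  have hsC := sum_mul_eigN_matAbs_diagonal c (d := fun j : Fin n => p j * q j)
    (fun _ => mul_nonneg (stair_nonneg hu0 _) (stair_nonneg hu0 _))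
    (stair_mul_stair_swap_antitone hu0 hu1.le) rfl
  rw [← hs] at hsA hsB hsC
  set A : Matrix (Fin n) (Fin n) ℂ := diagonal fun j => ((p j * p j : ℝ) : ℂ)
  set C : Matrix (Fin n) (Fin n) ℂ := diagonal fun j => ((p j * q j : ℝ) : ℂ)
  have hA0 : 0 ≤ s A := hsA ▸ sum_nonneg fun i _ => mul_nonneg (hnn i) (mul_self_nonneg _)
  have hAC : s A < s C := by
    rw [hsA, hsC, ← sub_pos, sum_mul_stair_swap_sub_sum_mul_stair c hk]
    exact mul_pos (by linarith) (by linarith [(div_lt_iff₀ hck1).1 hku])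
  have hlt : s A * s (diagonal fun j => ((q j * q j : ℝ) : ℂ)) < s C ^ 2 := by
    rw [hsB, ← hsA, sq]
    exact mul_self_lt_mul_self hA0 hAC
  exact ⟨_, _, _, ⟨_, fun _ => mul_self_nonneg _, rfl⟩, ⟨_, fun _ => mul_self_nonneg _, rfl⟩,
    ⟨_, fun _ => mul_nonneg (stair_nonneg hu0 _) (stair_nonneg hu0 _), rfl⟩,
    posSemidef_fromBlocks_diagonal_mul _ _, hlt, not_posSemidef_of_mul_lt_sq hlt⟩
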